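/- arXiv:2002.09028 — 3 statements merged into one kernel-verified Lean document; each statement's English description precedes it below -/
import Mathlib

section
/- Let Ĝ be a finite simple graph, L ⊆ V(Ĝ), O = V(Ĝ) ∖ L, r ≥ 1 and k natural numbers. Let G' be obtained from Ĝ by adding new vertices b, a₁, a₂, a₃ and connecting b to every vertex of O and to each of a₁, a₂, a₃ by a path of length r (each connection using its own r−1 new internal vertices). Then there exist sets D'₁, D'₂ ⊆ V(G') with |D'₁| + 2|D'₂| ≤ k+2 such that every vertex of V(G') ∖ D'₁ is within distance r in G' of some element of D'₂, if and only if there exist sets D̂₁, D̂₂ ⊆ V(Ĝ) with |D̂₁| + 2|D̂₂| ≤ k such that every vertex of L ∖ D̂₁ is within distance r in Ĝ of some element of D̂₂. -/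
/-- Graph obtained from `G` by adding new vertices `B` and, for each `p : P`, a fresh
path of length `len p` from `src p` to `dst p`: the path has `len p - 1` new internal
vertices (the pairs `⟨p, i⟩`); a connection of length `1` is just an edge. -/
def SimpleGraph.addPaths {V : Type*} (G : SimpleGraph V) (B P : Type*)
    (src dst : P → V ⊕ B) (len : P → ℕ) :
    SimpleGraph ((V ⊕ B) ⊕ (Σ p : P, Fin (len p - 1))) :=
  SimpleGraph.fromRel (fun x y =>
    (∃ u w, G.Adj u w ∧ x = .inl (.inl u) ∧ y = .inl (.inl w)) ∨
    (∃ p : P, len p = 1 ∧ x = .inl (src p) ∧ y = .inl (dst p)) ∨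
    (∃ p : P, ∃ i : Fin (len p - 1), (i : ℕ) = 0 ∧ x = .inl (src p) ∧ y = .inr ⟨p, i⟩) ∨
    (∃ p : P, ∃ i j : Fin (len p - 1), (i : ℕ) + 1 = (j : ℕ) ∧ x = .inr ⟨p, i⟩ ∧ y = .inr ⟨p, j⟩) ∨
    (∃ p : P, ∃ i : Fin (len p - 1), (i : ℕ) + 2 = len p ∧ x = .inr ⟨p, i⟩ ∧ y = .inl (dst p)))

/- New end-vertices for statement 9: `b = 0`, `a₁ = 1`, `a₂ = 2`, `a₃ = 3` (in `Fin 4`).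
Paths (all of length `r`): from `b` to every `o ∈ O = Lᶜ` and from `b` to each
of `a₁, a₂, a₃`. -/

/-- Sources of the added paths: all start at `b`. -/
def src9 {V : Type*} [Fintype V] [DecidableEq V] (L : Finset V) :
    ({o : V // o ∈ Lᶜ} ⊕ Fin 3) → V ⊕ Fin 4 :=
  fun _ => .inr 0

/-- Targets of the added paths. -/
def dst9 {V : Type*} [Fintype V] [DecidableEq V] (L : Finset V) :
    ({o : V // o ∈ Lᶜ} ⊕ Fin 3) → V ⊕ Fin 4
  | .inl o => .inl o.1
  | .inr j => .inr j.succ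

/-!
Contracting every added path onto its endpoint other than `b` turns an `r`-Roman dominating
pair of `G'` into one of `Ĝ` covering `L`. Indeed, every vertex within distance `r` of `L` lies in
`Ĝ` or inside a path towards `O`, and a walk through that region contracts to a walk of `Ĝ` that
is no longer. The cost drops by at least `2`: either `b ∈ D'₂`, or each of the three arms ending
in `a₁, a₂, a₃` must contain an element of `D'₁ ∪ D'₂` of its own. Conversely, adding `b` to
`D₂` covers all new vertices and all of `O` at cost `2`.
-/

namespace Set

variable {α β γ : Type*}

theorem ncard_preimage_inl_add_ncard_preimage_inr {s : Set (α ⊕ β)} (hs : s.Finite) :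
    (Sum.inl ⁻¹' s).ncard + (Sum.inr ⁻¹' s).ncard = s.ncard := by
  rw [← ncard_image_of_injective (Sum.inl ⁻¹' s) Sum.inl_injective,
    ← ncard_image_of_injective (Sum.inr ⁻¹' s) Sum.inr_injective,
    ← ncard_union_eq disjoint_image_inl_image_inr
      (hs.subset (image_preimage_subset _ _)) (hs.subset (image_preimage_subset _ _)),
    image_preimage_inl_union_image_preimage_inr]

theorem ncard_preimage_inl_image_add_ncard_preimage_inr_image_le (f : α → β ⊕ γ) {s : Set α}
    (hs : s.Finite) : (Sum.inl ⁻¹' (f '' s)).ncard + (Sum.inr ⁻¹' (f '' s)).ncard ≤ s.ncard := by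
  rw [ncard_preimage_inl_add_ncard_preimage_inr (hs.image f)]
  exact ncard_image_le hs

theorem two_le_ncard_add_two_mul_ncard_of_zero_mem_or_succ_mem {A B : Set (Fin 4)}
    (h : 0 ∈ B ∨ ∀ t : Fin 3, t.succ ∈ A ∪ B) : 2 ≤ A.ncard + 2 * B.ncard := by
  rcases h with h0 | hsucc
  · have := (ncard_pos (toFinite B)).2 ⟨0, h0⟩
    omega
  · have hsub : range Fin.succ ⊆ A ∪ B := range_subset_iff.2 hsucc
    have h3 : (range (Fin.succ : Fin 3 → Fin 4)).ncard = 3 := by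
      rw [ncard_range_of_injective (Fin.succ_injective 3), Nat.card_eq_fintype_card,
        Fintype.card_fin]
    have := ncard_le_ncard hsub
    have := ncard_union_le A B
    omega

end Set

namespace SimpleGraph

variable {α β : Type*}

def IsRomanDominatingPair (G : SimpleGraph α) (r : ℕ) (S D₁ D₂ : Set α) : Prop :=
  ∀ x ∈ S, x ∉ D₁ → ∃ d ∈ D₂, ∃ w : G.Walk d x, w.length ≤ r

theorem Walk.le_add_length_of_adj {G : SimpleGraph α} (f : α → ℕ)
    (hf : ∀ x y, G.Adj x y → f x ≤ f y + 1) {x y : α} (p : G.Walk x y) :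
    f x ≤ f y + p.length := by
  induction p with
  | nil => simp
  | cons h p ih => have := hf _ _ h; rw [Walk.length_cons]; omega

theorem Walk.exists_walk_length_le_of_partialMap {G : SimpleGraph α} {H : SimpleGraph β}
    (f : α → Option β)
    (hf : ∀ x y u w, G.Adj x y → f x = some u → f y = some w → u = w ∨ H.Adj u w)
    {x y : α} (p : G.Walk x y) (hp : ∀ z ∈ p.support, ∃ u, f z = some u) {u w : β}
    (hu : f x = some u) (hw : f y = some w) : ∃ q : H.Walk u w, q.length ≤ p.length := by
  induction p generalizing u with
  | nil =>
    obtain rfl : u = w := Option.some_injective _ (hu.symm.trans hw)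
    exact ⟨.nil, le_rfl⟩
  | cons h p ih =>
    obtain ⟨u', hu'⟩ := hp _ (p.support_subset_support_cons h p.start_mem_support)
    obtain ⟨q, hq⟩ := ih (fun z hz => hp z (List.mem_cons_of_mem _ hz)) hu' hw
    rcases hf _ _ _ _ h hu hu' with rfl | hadj
    · exact ⟨q, by rw [Walk.length_cons]; omega⟩
    · exact ⟨.cons hadj q, by simpa using hq⟩

section addPaths

variable {V B P : Type*} (G : SimpleGraph V) (src dst : P → V ⊕ B) (len : P → ℕ)

theorem addPaths_adj_induction {Q : (V ⊕ B) ⊕ (Σ p : P, Fin (len p - 1)) →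
      (V ⊕ B) ⊕ (Σ p : P, Fin (len p - 1)) → Prop}
    (hQ : ∀ x y, Q x y → Q y x)
    (hbase : ∀ u w, G.Adj u w → Q (.inl (.inl u)) (.inl (.inl w)))
    (hedge : ∀ p, len p = 1 → Q (.inl (src p)) (.inl (dst p)))
    (hfirst : ∀ p (i : Fin (len p - 1)), (i : ℕ) = 0 → Q (.inl (src p)) (.inr ⟨p, i⟩))
    (hstep : ∀ p (i j : Fin (len p - 1)), (i : ℕ) + 1 = j → Q (.inr ⟨p, i⟩) (.inr ⟨p, j⟩))
    (hlast : ∀ p (i : Fin (len p - 1)), (i : ℕ) + 2 = len p → Q (.inr ⟨p, i⟩) (.inl (dst p)))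
    {x y : (V ⊕ B) ⊕ (Σ p : P, Fin (len p - 1))}
    (h : (G.addPaths B P src dst len).Adj x y) : Q x y := by
  simp only [addPaths, fromRel_adj] at h
  rcases h.2 with
    (⟨u, w, hk, rfl, rfl⟩ | ⟨p, hk, rfl, rfl⟩ | ⟨p, i, hk, rfl, rfl⟩ | ⟨p, i, j, hk, rfl, rfl⟩ |
      ⟨p, i, hk, rfl, rfl⟩) |
    (⟨u, w, hk, rfl, rfl⟩ | ⟨p, hk, rfl, rfl⟩ | ⟨p, i, hk, rfl, rfl⟩ | ⟨p, i, j, hk, rfl, rfl⟩ |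
      ⟨p, i, hk, rfl, rfl⟩)
  exacts [hbase u w hk, hedge p hk, hfirst p i hk, hstep p i j hk, hlast p i hk,
    hQ _ _ (hbase u w hk), hQ _ _ (hedge p hk), hQ _ _ (hfirst p i hk),
    hQ _ _ (hstep p i j hk), hQ _ _ (hlast p i hk)]

def addPathsHom : G →g G.addPaths B P src dst len where
  toFun v := .inl (.inl v)
  map_rel' {u w} h := by
    simp only [addPaths, fromRel_adj]
    exact ⟨by simp [h.ne], Or.inl (Or.inl ⟨u, w, h, rfl, rfl⟩)⟩

theorem exists_walk_addPaths_internal (p : P) (i : Fin (len p - 1)) :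
    ∃ q : (G.addPaths B P src dst len).Walk (.inl (src p)) (.inr ⟨p, i⟩),
      q.length = i + 1 := by
  obtain ⟨i, hi⟩ := i
  induction i with
  | zero =>
    have hadj : (G.addPaths B P src dst len).Adj (.inl (src p)) (.inr ⟨p, ⟨0, hi⟩⟩) := by
      simp only [addPaths, fromRel_adj]
      exact ⟨by simp, Or.inl (Or.inr (Or.inr (Or.inl ⟨p, ⟨0, hi⟩, rfl, rfl, rfl⟩)))⟩
    exact ⟨hadj.toWalk, rfl⟩
  | succ i ih =>
    obtain ⟨q, hq⟩ := ih (by omega)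
    have hadj : (G.addPaths B P src dst len).Adj (.inr ⟨p, ⟨i, by omega⟩⟩)
        (.inr ⟨p, ⟨i + 1, hi⟩⟩) := by
      simp only [addPaths, fromRel_adj]
      exact ⟨by simp, Or.inl (Or.inr (Or.inr (Or.inr (Or.inl ⟨p, _, _, rfl, rfl, rfl⟩))))⟩
    exact ⟨q.concat hadj, by rw [Walk.length_concat, hq]⟩

theorem exists_walk_addPaths_dst (p : P) (hp : 1 ≤ len p) (hsd : src p ≠ dst p) :
    ∃ q : (G.addPaths B P src dst len).Walk (.inl (src p)) (.inl (dst p)), q.length = len p := by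
  rcases Nat.lt_or_ge (len p) 2 with hlt | hge
  · have hadj : (G.addPaths B P src dst len).Adj (.inl (src p)) (.inl (dst p)) := by
      simp only [addPaths, fromRel_adj]
      exact ⟨by simpa using hsd, Or.inl (Or.inr (Or.inl ⟨p, by omega, rfl, rfl⟩))⟩
    exact ⟨hadj.toWalk, by rw [hadj.length_toWalk]; omega⟩
  · obtain ⟨q, hq⟩ := G.exists_walk_addPaths_internal src dst len p ⟨len p - 2, by omega⟩
    have hadj : (G.addPaths B P src dst len).Adj (.inr ⟨p, ⟨len p - 2, by omega⟩⟩)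
        (.inl (dst p)) := by
      simp only [addPaths, fromRel_adj]
      exact ⟨by simp, Or.inl (Or.inr (Or.inr (Or.inr (Or.inr ⟨p, _, by simp; omega, rfl, rfl⟩))))⟩
    exact ⟨q.concat hadj, by rw [Walk.length_concat, hq, Fin.val_mk]; omega⟩

end addPaths

end SimpleGraph

namespace KernelGadget

variable {V : Type*} [Fintype V] [DecidableEq V] (Ghat : SimpleGraph V) (L : Finset V) (r : ℕ)

abbrev Vertex : Type _ := (V ⊕ Fin 4) ⊕ (Σ _p : ({o : V // o ∈ Lᶜ} ⊕ Fin 3), Fin (r - 1))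

abbrev graph : SimpleGraph (Vertex L r) :=
  Ghat.addPaths (Fin 4) ({o : V // o ∈ Lᶜ} ⊕ Fin 3) (src9 L) (dst9 L) (fun _ => r)

abbrev hub : Vertex L r := .inl (.inr 0)

def proj : Vertex L r → V ⊕ Fin 4
  | .inl x => x
  | .inr ⟨p, _⟩ => dst9 L p

/-- A lower bound for the distance to `L`, truncated at `r + 1`. -/
def distLBound : Vertex L r → ℕ
  | .inl (.inl v) => if v ∈ L then 0 else 1
  | .inr ⟨.inl _, i⟩ => r - i
  | _ => r + 1

/-- A lower bound for the distance to `a_{t+1}`, truncated at `r + 1`. -/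
def distArmBound (t : Fin 3) : Vertex L r → ℕ
  | .inl (.inr j) => if j = 0 then r else if j = t.succ then 0 else r + 1
  | .inr ⟨.inr s, i⟩ => if s = t then r - 1 - i else r + 1
  | _ => r + 1

theorem proj_adj {x y : Vertex L r} (h : (graph Ghat L r).Adj x y) {u w : V}
    (hu : proj L r x = .inl u) (hw : proj L r y = .inl w) : u = w ∨ Ghat.Adj u w := by
  revert u w
  refine Ghat.addPaths_adj_induction _ _ _ (Q := fun x y => ∀ {u w : V},
    proj L r x = .inl u → proj L r y = .inl w → u = w ∨ Ghat.Adj u w) ?_ ?_ ?_ ?_ ?_ ?_ h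
  · intro x y hxy u w hu hw
    exact (hxy hw hu).imp Eq.symm SimpleGraph.Adj.symm
  · intro u w huw u' w' hu hw
    cases hu; cases hw
    exact Or.inr huw
  · intro p _ u _ hu
    cases hu
  · intro p i _ u _ hu
    cases hu
  · intro p i j _ u w hu hw
    exact Or.inl (Sum.inl_injective (hu.symm.trans hw))
  · intro p i _ u w hu hw
    exact Or.inl (Sum.inl_injective (hu.symm.trans hw))

theorem distLBound_adj {x y : Vertex L r} (h : (graph Ghat L r).Adj x y) :
    distLBound L r x ≤ distLBound L r y + 1 := by
  refine (Ghat.addPaths_adj_induction _ _ _ (Q := fun x y =>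
    distLBound L r x ≤ distLBound L r y + 1 ∧ distLBound L r y ≤ distLBound L r x + 1)
    (fun _ _ => And.symm) ?_ ?_ ?_ ?_ ?_ h).1
  · intro u w _
    simp only [distLBound]
    split_ifs <;> omega
  · rintro (o | s) _
    · simp [distLBound, src9, dst9, Finset.mem_compl.mp o.2]
      omega
    · simp [distLBound, src9, dst9]
  · rintro (o | s) i hi
    · simp [distLBound, src9]
      omega
    · simp [distLBound, src9]
  · rintro (o | s) i j hij
    · simp [distLBound]
      omega
    · simp [distLBound]
  · rintro (o | s) i _
    · simp [distLBound, dst9, Finset.mem_compl.mp o.2]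
      omega
    · simp [distLBound, dst9]

theorem distArmBound_adj (t : Fin 3) {x y : Vertex L r} (h : (graph Ghat L r).Adj x y) :
    distArmBound L r t x ≤ distArmBound L r t y + 1 := by
  refine (Ghat.addPaths_adj_induction _ _ _ (Q := fun x y =>
    distArmBound L r t x ≤ distArmBound L r t y + 1 ∧
      distArmBound L r t y ≤ distArmBound L r t x + 1)
    (fun _ _ => And.symm) ?_ ?_ ?_ ?_ ?_ h).1
  · simp [distArmBound]
  · rintro (o | s) _
    · simp [distArmBound, src9, dst9]
      omega
    · simp [distArmBound, src9, dst9]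
      split_ifs <;> omega
  · rintro (o | s) i hi
    · simp [distArmBound, src9]
      omega
    · simp [distArmBound, src9]
      split_ifs <;> omega
  · rintro (o | s) i j hij
    · simp [distArmBound]
    · have := j.isLt
      simp [distArmBound]
      split_ifs <;> omega
  · rintro (o | s) i _
    · simp [distArmBound, dst9]
    · simp [distArmBound, dst9]
      split_ifs <;> omega

theorem distLBound_le_length {v : V} (hv : v ∈ L) {x : Vertex L r}
    (q : (graph Ghat L r).Walk x (.inl (.inl v))) : distLBound L r x ≤ q.length := by
  simpa [distLBound, hv] using q.le_add_length_of_adj _ fun _ _ => distLBound_adj Ghat L r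

theorem exists_proj_eq_inl_of_distLBound_le {x : Vertex L r} (h : distLBound L r x ≤ r) :
    ∃ u, proj L r x = .inl u := by
  rcases x with (v | j) | ⟨o | s, i⟩
  · exact ⟨v, rfl⟩
  · simp [distLBound] at h
  · exact ⟨o, rfl⟩
  · simp [distLBound] at h

theorem distArmBound_le_length (t : Fin 3) {x : Vertex L r}
    (q : (graph Ghat L r).Walk x (.inl (.inr t.succ))) : distArmBound L r t x ≤ q.length := by
  simpa [distArmBound, Fin.succ_ne_zero] using
    q.le_add_length_of_adj _ fun _ _ => distArmBound_adj Ghat L r t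

theorem eq_hub_or_proj_eq_of_distArmBound_le (t : Fin 3) {x : Vertex L r}
    (h : distArmBound L r t x ≤ r) : x = hub L r ∨ proj L r x = .inr t.succ := by
  rcases x with (v | j) | ⟨o | s, i⟩
  · simp [distArmBound] at h
  · simp only [distArmBound] at h
    split_ifs at h with h0 ht
    · exact Or.inl (by rw [h0])
    · exact Or.inr (by rw [ht]; rfl)
    · omega
  · simp [distArmBound] at h
  · simp only [distArmBound] at h
    split_ifs at h with hs
    · exact Or.inr (by subst hs; rfl)
    · omega

theorem exists_walk_hub (hr : 1 ≤ r) {x : Vertex L r} (hx : ∀ v ∈ L, x ≠ .inl (.inl v)) :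
    ∃ q : (graph Ghat L r).Walk (hub L r) x, q.length ≤ r := by
  rcases x with (v | j) | ⟨p, i⟩
  · obtain ⟨q, hq⟩ := Ghat.exists_walk_addPaths_dst (src9 L) (dst9 L) (fun _ => r)
      (.inl ⟨v, Finset.mem_compl.2 fun hv => hx v hv rfl⟩) hr (by simp [src9, dst9])
    exact ⟨q, hq.le⟩
  · obtain rfl | ⟨t, rfl⟩ := Fin.eq_zero_or_eq_succ j
    · exact ⟨.nil, by simp⟩
    · obtain ⟨q, hq⟩ := Ghat.exists_walk_addPaths_dst (src9 L) (dst9 L) (fun _ => r)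
        (.inr t) hr (by simp [src9, dst9, (Fin.succ_ne_zero t).symm])
      exact ⟨q, hq.le⟩
  · obtain ⟨q, hq⟩ := Ghat.exists_walk_addPaths_internal (src9 L) (dst9 L) (fun _ => r) p i
    exact ⟨q, hq.trans_le (by have := i.isLt; omega)⟩

theorem isRomanDominatingPair_graph (hr : 1 ≤ r) {D₁ D₂ : Set V}
    (hD : Ghat.IsRomanDominatingPair r L D₁ D₂) :
    (graph Ghat L r).IsRomanDominatingPair r Set.univ
      (Ghat.addPathsHom (src9 L) (dst9 L) (fun _ => r) '' D₁)
      (insert (hub L r) (Ghat.addPathsHom (src9 L) (dst9 L) (fun _ => r) '' D₂)) := by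
  intro x _ hx
  by_cases hxL : ∀ v ∈ L, x ≠ .inl (.inl v)
  · obtain ⟨q, hq⟩ := exists_walk_hub Ghat L r hr hxL
    exact ⟨_, Set.mem_insert _ _, q, hq⟩
  · simp only [not_forall, not_not] at hxL
    obtain ⟨v, hv, rfl⟩ := hxL
    obtain ⟨d, hd, q, hq⟩ := hD v hv fun h => hx ⟨v, h, rfl⟩
    exact ⟨_, Set.mem_insert_of_mem _ ⟨d, hd, rfl⟩, q.map _, (q.length_map _).trans_le hq⟩

theorem isRomanDominatingPair_base {D₁' D₂' : Set (Vertex L r)}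
    (hD : (graph Ghat L r).IsRomanDominatingPair r Set.univ D₁' D₂') :
    Ghat.IsRomanDominatingPair r L (Sum.inl ⁻¹' (proj L r '' D₁'))
      (Sum.inl ⁻¹' (proj L r '' D₂')) := by
  intro v hv hvD
  obtain ⟨d, hd, q, hq⟩ := hD (.inl (.inl v)) trivial fun h => hvD ⟨_, h, rfl⟩
  have hsupp : ∀ z ∈ q.support, ∃ u, (proj L r z).getLeft? = some u := fun z hz => by
    obtain ⟨u, hu⟩ := exists_proj_eq_inl_of_distLBound_le L r
      ((distLBound_le_length Ghat L r hv (q.dropUntil z hz)).trans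
        ((q.length_dropUntil_le_length hz).trans hq))
    exact ⟨u, by simp [hu]⟩
  obtain ⟨u, hu⟩ := hsupp d q.start_mem_support
  obtain ⟨q', hq'⟩ := q.exists_walk_length_le_of_partialMap _
    (fun _ _ _ _ h hx hy => proj_adj Ghat L r h (by simpa using hx) (by simpa using hy))
    hsupp hu rfl
  exact ⟨u, ⟨d, hd, by simpa using hu⟩, q', hq'.trans hq⟩

theorem two_le_ncard_arms {D₁' D₂' : Set (Vertex L r)}
    (hD : (graph Ghat L r).IsRomanDominatingPair r Set.univ D₁' D₂') :
    2 ≤ (Sum.inr ⁻¹' (proj L r '' D₁')).ncard + 2 * (Sum.inr ⁻¹' (proj L r '' D₂')).ncard := by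
  apply Set.two_le_ncard_add_two_mul_ncard_of_zero_mem_or_succ_mem
  by_cases hb : hub L r ∈ D₂'
  · exact Or.inl ⟨_, hb, rfl⟩
  refine Or.inr fun t => ?_
  by_cases ha : (.inl (.inr t.succ) : Vertex L r) ∈ D₁'
  · exact Or.inl ⟨_, ha, rfl⟩
  obtain ⟨d, hd, q, hq⟩ := hD _ trivial ha
  rcases eq_hub_or_proj_eq_of_distArmBound_le L r t
      ((distArmBound_le_length Ghat L r t q).trans hq) with rfl | hdt
  · exact absurd hd hb
  · exact Or.inr ⟨d, hd, hdt⟩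

theorem exists_base_pair {k : ℕ} {D₁' D₂' : Set (Vertex L r)}
    (hcost : D₁'.ncard + 2 * D₂'.ncard ≤ k + 2)
    (hD : (graph Ghat L r).IsRomanDominatingPair r Set.univ D₁' D₂') :
    ∃ D₁ D₂ : Set V, D₁.ncard + 2 * D₂.ncard ≤ k ∧ Ghat.IsRomanDominatingPair r L D₁ D₂ := by
  refine ⟨_, _, ?_, isRomanDominatingPair_base Ghat L r hD⟩
  have h₁ := Set.ncard_preimage_inl_image_add_ncard_preimage_inr_image_le (proj L r)
    (Set.toFinite D₁')
  have h₂ := Set.ncard_preimage_inl_image_add_ncard_preimage_inr_image_le (proj L r)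
    (Set.toFinite D₂')
  have := two_le_ncard_arms Ghat L r hD
  omega

theorem exists_graph_pair (hr : 1 ≤ r) {k : ℕ} {D₁ D₂ : Set V}
    (hcost : D₁.ncard + 2 * D₂.ncard ≤ k) (hD : Ghat.IsRomanDominatingPair r L D₁ D₂) :
    ∃ D₁' D₂' : Set (Vertex L r), D₁'.ncard + 2 * D₂'.ncard ≤ k + 2 ∧
      (graph Ghat L r).IsRomanDominatingPair r Set.univ D₁' D₂' := by
  refine ⟨_, _, ?_, isRomanDominatingPair_graph Ghat L r hr hD⟩
  have h₁ := Set.ncard_image_le (f := Ghat.addPathsHom (src9 L) (dst9 L) (fun _ => r))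
    (Set.toFinite D₁)
  have h₂ := Set.ncard_image_le (f := Ghat.addPathsHom (src9 L) (dst9 L) (fun _ => r))
    (Set.toFinite D₂)
  have := Set.ncard_insert_le (hub L r) (Ghat.addPathsHom (src9 L) (dst9 L) (fun _ => r) '' D₂)
  omega

end KernelGadget

/-- Let `G'` be obtained from `Ĝ` by adding new vertices
`b, a₁, a₂, a₃` and connecting `b` to every vertex of `O = V(Ĝ) ∖ L` and to each of
`a₁, a₂, a₃` by a path of length `r`. Then `G'` has an `r`-Roman dominating pair of
cost at most `k + 2` (covering all of `V(G')`) iff `Ĝ` has an `r`-Roman dominating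
pair of cost at most `k` covering `L`. -/
theorem roman_domination_kernel_back {V : Type*} [Fintype V] [DecidableEq V]
    (Ghat : SimpleGraph V) (L : Finset V) (r k : ℕ) (hr : 1 ≤ r) :
    (∃ D₁' D₂' : Set ((V ⊕ Fin 4) ⊕ (Σ _p : ({o : V // o ∈ Lᶜ} ⊕ Fin 3), Fin (r - 1))),
        D₁'.ncard + 2 * D₂'.ncard ≤ k + 2 ∧
        ∀ x, x ∉ D₁' → ∃ d ∈ D₂',
          ∃ w : (Ghat.addPaths (Fin 4) ({o : V // o ∈ Lᶜ} ⊕ Fin 3)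
                  (src9 L) (dst9 L) (fun _ => r)).Walk d x, w.length ≤ r) ↔
    (∃ D₁ D₂ : Set V, D₁.ncard + 2 * D₂.ncard ≤ k ∧
        ∀ v ∈ L, v ∉ D₁ → ∃ d ∈ D₂, ∃ w : Ghat.Walk d v, w.length ≤ r) := by
  constructor
  · rintro ⟨D₁', D₂', hcost, hD⟩
    exact KernelGadget.exists_base_pair Ghat L r hcost fun x _ => hD x
  · rintro ⟨D₁, D₂, hcost, hD⟩
    obtain ⟨D₁', D₂', hcost', hD'⟩ := KernelGadget.exists_graph_pair Ghat L r hr hcost hD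
    exact ⟨D₁', D₂', hcost', fun x => hD' x trivial⟩
end

section
/- Let G be a finite simple graph, r, c, k natural numbers with c ≥ 1, and L ⊆ V(G) a constraint core for (r,c)-domination, i.e. every set D ⊆ V(G) with |N^r_G[v] ∩ D| ≥ c for all v ∈ L also satisfies |N^r_G[v] ∩ D| ≥ c for all v ∈ V(G). Let Ĝ be an induced subgraph of G with L ⊆ V(Ĝ) such that: (1) for all u, v ∈ L and all d ≤ r, u is within distance d of v in G if and only if u is within distance d of v in Ĝ; and (2) for every function ν : L → {1,…,r} ∪ {∞}, if exactly p vertices x ∈ V(G) ∖ L satisfy π^r_{G,L}[x] = ν, then at least min(c,p) vertices x' ∈ V(Ĝ) ∖ L satisfy π^r_{Ĝ,L}[x'] = ν. Then G has an (r,c)-dominating set of size at most k if and only if there is a set D̂ ⊆ V(Ĝ) of size at most k with |N^r_{Ĝ}[v] ∩ D̂| ≥ c for every v ∈ L. -/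
/-!
Replace an `(r,c)`-dominating set `D` of `G` by `(D ∩ L) ∪ B`, where, for every profile `ν`
realized by `p` vertices of `D ∖ L`, the set `B` contains `min c p` vertices of `V(Ĝ) ∖ L` of
profile `ν`; these exist by (2), and `|B| ≤ |D ∖ L|`.  For `v ∈ L`, whether a vertex `x`
lies in the `r`-ball of `v` depends only on the profile of `x`: a walk from `x` to `v` first
meets `L` at some `u`, is `L`-avoiding up to `u`, and by (1) its remaining part may be taken
inside `Ĝ`.  So every `v ∈ L` still sees `min c (#(ball ∩ D ∖ L))` vertices of `B`, together with
all of `ball ∩ D ∩ L`, hence at least `c`.  Conversely, balls of `Ĝ` lie in balls of `G`, and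
`L` is a constraint core.
-/

/-- The closed `d`-neighbourhood of `v` in the subgraph of `G` induced on `S`:
vertices reachable from `v` by a walk of length at most `d` all of whose vertices lie
in `S`.  With `S = Set.univ` this is the closed `d`-neighbourhood in `G` itself. -/
def ballIn {V : Type*} (G : SimpleGraph V) (S : Set V) (d : ℕ) (v : V) : Set V :=
  {u : V | ∃ w : G.Walk u v, w.length ≤ d ∧ ∀ x ∈ w.support, x ∈ S}

/-- The `r`-projection profile `π^r_{H,X}[u]` evaluated at `v`, where `H` is the
subgraph of `G` induced on `S`: the minimum length of an `X`-avoiding walk from `u`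
to `v` inside `S` if that minimum is at most `r`, and `∞` otherwise.  (`X`-avoiding
means no internal vertex lies in `X`.)  With `S = Set.univ` this is the profile in
`G` itself. -/
noncomputable def profileIn {V : Type*} (G : SimpleGraph V) (S X : Set V) (r : ℕ)
    (u v : V) : ℕ∞ :=
  let d := sInf {n : ℕ∞ | ∃ w : G.Walk u v, (∀ x ∈ w.support, x ∈ S) ∧
    (∀ x ∈ w.support.tail.dropLast, x ∉ X) ∧ (w.length : ℕ∞) = n}
  if d ≤ (r : ℕ∞) then d else ⊤

open Finset

section

variable {V : Type*} {G : SimpleGraph V}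

theorem SimpleGraph.Walk.exists_append_eq_of_first_mem {L : Set V} {x v : V} (w : G.Walk x v)
    (hv : v ∈ L) :
    ∃ u ∈ L, ∃ (w₁ : G.Walk x u) (w₂ : G.Walk u v),
      w₁.append w₂ = w ∧ ∀ y ∈ w₁.support.dropLast, y ∉ L := by
  induction w with
  | nil => exact ⟨_, hv, nil, nil, rfl, by simp⟩
  | @cons x y v h w ih =>
    by_cases hx : x ∈ L
    · exact ⟨x, hx, nil, cons h w, rfl, by simp⟩
    obtain ⟨u, hu, w₁, w₂, rfl, hw₁⟩ := ih hv
    refine ⟨u, hu, cons h w₁, w₂, rfl, ?_⟩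
    rw [support_cons, List.dropLast_cons_of_ne_nil w₁.support_ne_nil]
    rintro y (_ | ⟨_, hy⟩)
    exacts [hx, hw₁ y hy]

theorem ENat.sInf_le_coe_iff {T : Set ℕ∞} {a : ℕ} : sInf T ≤ a ↔ ∃ n ∈ T, n ≤ a := by
  refine ⟨fun h => ?_, fun ⟨n, hn, hna⟩ => sInf_le_of_le hn hna⟩
  rcases T.eq_empty_or_nonempty with rfl | hT
  · simp at h
  · exact ⟨_, csInf_mem hT, h⟩

theorem profileIn_le_coe_iff {S X : Set V} {r a : ℕ} {x u : V} (ha : a ≤ r) :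
    profileIn G S X r x u ≤ a ↔
      ∃ w : G.Walk x u, (∀ y ∈ w.support, y ∈ S) ∧
        (∀ y ∈ w.support.tail.dropLast, y ∉ X) ∧ w.length ≤ a := by
  have har : (a : ℕ∞) ≤ r := by exact_mod_cast ha
  suffices profileIn G S X r x u ≤ a ↔
      sInf {n : ℕ∞ | ∃ w : G.Walk x u, (∀ y ∈ w.support, y ∈ S) ∧
        (∀ y ∈ w.support.tail.dropLast, y ∉ X) ∧ (w.length : ℕ∞) = n} ≤ a by
    simp [this, ENat.sInf_le_coe_iff, and_assoc]
  dsimp only [profileIn]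
  split_ifs with h
  · rfl
  · exact iff_of_false (by simp) fun h' => h (h'.trans har)

theorem ballIn_mono {S T : Set V} (hST : S ⊆ T) (d : ℕ) (v : V) :
    ballIn G S d v ⊆ ballIn G T d v :=
  fun _ ⟨w, hw, hS⟩ => ⟨w, hw, fun y hy => hST (hS y hy)⟩

theorem mem_ballIn_univ {d : ℕ} {u v : V} :
    u ∈ ballIn G Set.univ d v ↔ ∃ w : G.Walk u v, w.length ≤ d := by
  simp [ballIn]

noncomputable def projProfile (G : SimpleGraph V) (S L : Set V) (r : ℕ) (x : V) : L → ℕ∞ :=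
  fun v => profileIn G S L r x v

def ReachesVia (G : SimpleGraph V) (S : Set V) {L : Set V} (r : ℕ) (ν : L → ℕ∞) (v : V) :
    Prop :=
  ∃ u : L, ∃ a b : ℕ, a + b ≤ r ∧ ν u ≤ a ∧ (u : V) ∈ ballIn G S b v

theorem mem_ballIn_iff_reachesVia {S L : Set V} {r : ℕ} {x v : V} (hv : v ∈ L) :
    x ∈ ballIn G S r v ↔ ReachesVia G S r (projProfile G S L r x) v := by
  constructor
  · rintro ⟨w, hw, hS⟩
    obtain ⟨u, hu, w₁, w₂, rfl, hw₁⟩ := w.exists_append_eq_of_first_mem hv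
    simp only [SimpleGraph.Walk.length_append, SimpleGraph.Walk.mem_support_append_iff] at hw hS
    have hprofile : profileIn G S L r x u ≤ w₁.length := by
      refine (profileIn_le_coe_iff (by omega)).2
        ⟨w₁, fun y hy => hS y (.inl hy), fun y hy => ?_, le_rfl⟩
      rw [← List.tail_dropLast] at hy
      exact hw₁ y (List.mem_of_mem_tail hy)
    exact ⟨⟨u, hu⟩, w₁.length, w₂.length, hw, hprofile, w₂, le_rfl, fun y hy => hS y (.inr hy)⟩
  · rintro ⟨⟨u, hu⟩, a, b, hab, hprofile, w₂, hw₂, hS₂⟩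
    obtain ⟨w₁, hS₁, -, hw₁⟩ := (profileIn_le_coe_iff (by omega)).1 hprofile
    refine ⟨w₁.append w₂, by simp only [SimpleGraph.Walk.length_append]; omega, fun y hy => ?_⟩
    rcases (SimpleGraph.Walk.mem_support_append_iff _ _).1 hy with hy | hy
    exacts [hS₁ y hy, hS₂ y hy]

theorem reachesVia_congr {S T L : Set V} {r : ℕ} {v : V} (ν : L → ℕ∞)
    (h : ∀ u ∈ L, ∀ d ≤ r, u ∈ ballIn G S d v ↔ u ∈ ballIn G T d v) :
    ReachesVia G S r ν v ↔ ReachesVia G T r ν v :=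
  exists_congr fun u => exists_congr fun _ => exists_congr fun b =>
    and_congr_right fun hab => and_congr_right fun _ => h u u.2 b (by omega)

theorem Finset.min_sum_le_sum_min {ι : Type*} (c : ℕ) (s : Finset ι) (f : ι → ℕ) :
    min c (∑ i ∈ s, f i) ≤ ∑ i ∈ s, min c (f i) := by
  classical
  induction s using Finset.induction_on with
  | empty => simp
  | insert i s hi ih => rw [sum_insert hi, sum_insert hi]; omega

theorem Finset.exists_subset_forall_min_card_filter_le {α α' β : Type*} [DecidableEq α']
    [DecidableEq β] (c : ℕ) (A : Finset α) (K : Finset α') (φ : α → β) (ψ : α' → β)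
    (h : ∀ ν, min c #{x ∈ A | φ x = ν} ≤ #{y ∈ K | ψ y = ν}) :
    ∃ B ⊆ K, #B ≤ #A ∧ ∀ (R : β → Prop) [DecidablePred R],
      min c #{x ∈ A | R (φ x)} ≤ #{y ∈ B | R (ψ y)} := by
  choose t ht htcard using fun ν => exists_subset_card_eq (h ν)
  have hdisj (T : Finset β) : (T : Set β).PairwiseDisjoint t := fun ν _ ν' _ hne =>
    disjoint_left.2 fun y hy hy' =>
      hne ((mem_filter.1 (ht ν hy)).2.symm.trans (mem_filter.1 (ht ν' hy')).2)
  have hcard (T : Finset β) : #(T.biUnion t) = ∑ ν ∈ T, min c #{x ∈ A | φ x = ν} := by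
    rw [card_biUnion (hdisj T)]
    exact sum_congr rfl fun ν _ => htcard ν
  refine ⟨(A.image φ).biUnion t, biUnion_subset.2 fun ν _ => (ht ν).trans (filter_subset _ _),
    ?_, fun R _ => ?_⟩
  · calc #((A.image φ).biUnion t) = ∑ ν ∈ A.image φ, min c #{x ∈ A | φ x = ν} := hcard _
      _ ≤ ∑ ν ∈ A.image φ, #{x ∈ A | φ x = ν} := sum_le_sum fun _ _ => min_le_right _ _
      _ = #A := (card_eq_sum_card_image φ A).symm
  · set T := {ν ∈ A.image φ | R ν}
    have hA : #{x ∈ A | R (φ x)} = ∑ ν ∈ T, #{x ∈ A | φ x = ν} := by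
      rw [sum_card_fiberwise_eq_card_filter]
      exact congrArg card (filter_congr fun x hx => by simp [T, mem_image_of_mem φ hx])
    have hsub : T.biUnion t ⊆ {y ∈ (A.image φ).biUnion t | R (ψ y)} := by
      refine biUnion_subset.2 fun ν hν y hy =>
        mem_filter.2 ⟨mem_biUnion.2 ⟨ν, (mem_filter.1 hν).1, hy⟩, ?_⟩
      rw [(mem_filter.1 (ht ν hy)).2]
      exact (mem_filter.1 hν).2
    calc min c #{x ∈ A | R (φ x)} ≤ ∑ ν ∈ T, min c #{x ∈ A | φ x = ν} :=
          hA ▸ min_sum_le_sum_min c T _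
      _ = #(T.biUnion t) := (hcard T).symm
      _ ≤ _ := card_le_card hsub

theorem Set.ncard_inter_coe_finset {α : Type*} (s : Set α) [DecidablePred (· ∈ s)]
    (E : Finset α) : (s ∩ ↑E).ncard = #{x ∈ E | x ∈ s} := by
  rw [← Set.ncard_coe_finset, coe_filter, Set.inter_comm]
  rfl

theorem forall_mem_profileIn_eq_iff {S L : Set V} {r : ℕ} {x : V} {ν : V → ℕ∞} :
    (∀ v ∈ L, profileIn G S L r x v = ν v) ↔ projProfile G S L r x = fun v : L => ν v := by
  simp [funext_iff, projProfile]

theorem exists_dominating_subset_of_projection_kernel [Fintype V] {r c : ℕ} {L S : Set V}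
    (hLS : L ⊆ S)
    (hdist : ∀ u ∈ L, ∀ v ∈ L, ∀ d ≤ r, u ∈ ballIn G Set.univ d v ↔ u ∈ ballIn G S d v)
    (hker : ∀ ν : V → ℕ∞,
      min c {x : V | x ∉ L ∧ ∀ v ∈ L, profileIn G Set.univ L r x v = ν v}.ncard
        ≤ {x : V | x ∈ S ∧ x ∉ L ∧ ∀ v ∈ L, profileIn G S L r x v = ν v}.ncard)
    (D : Finset V) (hD : ∀ v ∈ L, c ≤ (ballIn G Set.univ r v ∩ D).ncard) :
    ∃ D' : Finset V, ↑D' ⊆ S ∧ #D' ≤ #D ∧ ∀ v ∈ L, c ≤ (ballIn G S r v ∩ D').ncard := by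
  classical
  set DL := {x ∈ D | x ∈ L}
  set A := {x ∈ D | x ∉ L}
  set K : Finset V := {x | x ∈ S ∧ x ∉ L}
  have hAK (ν : L → ℕ∞) : min c #{x ∈ A | projProfile G Set.univ L r x = ν} ≤
      #{y ∈ K | projProfile G S L r y = ν} := by
    -- `hker` speaks of profiles defined on all of `V`: extend `ν` by `0` off `L`.
    have := hker (Function.extend Subtype.val ν 0)
    simp only [forall_mem_profileIn_eq_iff, Subtype.val_injective.extend_apply] at this
    calc _ ≤ min c {x | x ∉ L ∧ projProfile G Set.univ L r x = ν}.ncard := by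
          refine min_le_min_left _ ?_
          rw [← Set.ncard_coe_finset]
          exact Set.ncard_le_ncard (fun x hx => by simp_all [A]) (Set.toFinite _)
      _ ≤ _ := this
      _ = _ := by rw [← Set.ncard_coe_finset]; congr 1; ext; simp [K, and_assoc]
  obtain ⟨B, hBK, hBA, hB⟩ := exists_subset_forall_min_card_filter_le c A K _ _ hAK
  refine ⟨DL ∪ B, ?_, ?_, fun v hv => ?_⟩
  · rw [coe_union]
    exact Set.union_subset (fun x hx => hLS (mem_filter.1 hx).2)
      fun x hx => (mem_filter.1 (hBK hx)).2.1
  · calc #(DL ∪ B) ≤ #DL + #B := card_union_le _ _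
      _ ≤ #DL + #A := by omega
      _ = #D := card_filter_add_card_filter_not _
  · have hreach (x : V) :
        x ∈ ballIn G Set.univ r v ↔ ReachesVia G S r (projProfile G Set.univ L r x) v :=
      (mem_ballIn_iff_reachesVia hv).trans
        (reachesVia_congr _ fun u hu d hd => hdist u hu v hv d hd)
    have hBv :
        min c #{x ∈ A | x ∈ ballIn G Set.univ r v} ≤ #{y ∈ B | y ∈ ballIn G S r v} := by
      simpa only [← hreach, ← mem_ballIn_iff_reachesVia hv] using hB (ReachesVia G S r · v)
    have hsplit : #{x ∈ D | x ∈ ballIn G Set.univ r v} =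
        #{x ∈ DL | x ∈ ballIn G Set.univ r v} + #{x ∈ A | x ∈ ballIn G Set.univ r v} := by
      rw [← card_filter_add_card_filter_not (p := (· ∈ L))]
      simp only [DL, A, filter_filter, and_comm]
    have hDL : {x ∈ DL | x ∈ ballIn G S r v} = {x ∈ DL | x ∈ ballIn G Set.univ r v} :=
      filter_congr fun x hx => (hdist x (mem_filter.1 hx).2 v hv r le_rfl).symm
    have hdisj : Disjoint DL B :=
      disjoint_left.2 fun x hx hxB => (mem_filter.1 (hBK hxB)).2.2 (mem_filter.1 hx).2
    have hDv := hD v hv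
    rw [Set.ncard_inter_coe_finset, hsplit] at hDv
    rw [Set.ncard_inter_coe_finset, filter_union,
      card_union_of_disjoint (disjoint_filter_filter hdisj), hDL]
    omega

end

theorem rc_domination_projection_kernel_general {V : Type*} [Fintype V]
    (G : SimpleGraph V) (r c k : ℕ) (L S : Set V) (hLS : L ⊆ S)
    (hcore : ∀ D : Set V,
      (∀ v ∈ L, c ≤ (ballIn G Set.univ r v ∩ D).ncard) →
      ∀ v : V, c ≤ (ballIn G Set.univ r v ∩ D).ncard)
    (h1 : ∀ u ∈ L, ∀ v ∈ L, ∀ d ≤ r,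
      ((∃ w : G.Walk u v, w.length ≤ d) ↔
       (∃ w : G.Walk u v, w.length ≤ d ∧ ∀ x ∈ w.support, x ∈ S)))
    (h2 : ∀ ν : V → ℕ∞,
      min c {x : V | x ∉ L ∧ ∀ v ∈ L, profileIn G Set.univ L r x v = ν v}.ncard
        ≤ {x : V | x ∈ S ∧ x ∉ L ∧ ∀ v ∈ L, profileIn G S L r x v = ν v}.ncard) :
    (∃ D : Set V, D.ncard ≤ k ∧ ∀ v : V, c ≤ (ballIn G Set.univ r v ∩ D).ncard) ↔
    (∃ D : Set V, D ⊆ S ∧ D.ncard ≤ k ∧ ∀ v ∈ L, c ≤ (ballIn G S r v ∩ D).ncard) := by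
  constructor
  · rintro ⟨D, hDk, hD⟩
    obtain ⟨D, rfl⟩ := D.toFinite.exists_finset_coe
    obtain ⟨D', hD'S, hD'k, hD'⟩ := exists_dominating_subset_of_projection_kernel hLS
      (fun u hu v hv d hd => mem_ballIn_univ.trans (h1 u hu v hv d hd)) h2 D fun v _ => hD v
    rw [Set.ncard_coe_finset] at hDk
    exact ⟨D', hD'S, (Set.ncard_coe_finset D').trans_le (hD'k.trans hDk), hD'⟩
  · rintro ⟨D, -, hDk, hD⟩
    refine ⟨D, hDk, hcore D fun v hv => (hD v hv).trans ?_⟩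
    exact Set.ncard_le_ncard
      (Set.inter_subset_inter_left _ (ballIn_mono (Set.subset_univ S) r v))

/-- Let `L` be a constraint core for `(r,c)`-domination in `G` and let
`Ĝ` be the subgraph of `G` induced on `S ⊇ L` such that (1) distances up to `r`
between vertices of `L` agree in `G` and `Ĝ`, and (2) every `r`-projection profile
onto `L` realized by `p` vertices of `V(G) ∖ L` is realized by at least `min c p`
vertices of `V(Ĝ) ∖ L` (i.e. `Ĝ` is an `(r,c)`-projection kernel of `(G,L)`).  Then
`G` has an `(r,c)`-dominating set of size at most `k` iff there is `D̂ ⊆ V(Ĝ)` of size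
at most `k` with `|N^r_Ĝ[v] ∩ D̂| ≥ c` for every `v ∈ L`. -/
theorem rc_domination_projection_kernel {V : Type*} [Fintype V]
    (G : SimpleGraph V) (r c k : ℕ) (hc : 1 ≤ c) (L S : Set V) (hLS : L ⊆ S)
    (hcore : ∀ D : Set V,
      (∀ v ∈ L, c ≤ (ballIn G Set.univ r v ∩ D).ncard) →
      ∀ v : V, c ≤ (ballIn G Set.univ r v ∩ D).ncard)
    (h1 : ∀ u ∈ L, ∀ v ∈ L, ∀ d ≤ r,
      ((∃ w : G.Walk u v, w.length ≤ d) ↔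
       (∃ w : G.Walk u v, w.length ≤ d ∧ ∀ x ∈ w.support, x ∈ S)))
    (h2 : ∀ ν : V → ℕ∞,
      min c {x : V | x ∉ L ∧ ∀ v ∈ L, profileIn G Set.univ L r x v = ν v}.ncard
        ≤ {x : V | x ∈ S ∧ x ∉ L ∧ ∀ v ∈ L, profileIn G S L r x v = ν v}.ncard) :
    (∃ D : Set V, D.ncard ≤ k ∧ ∀ v : V, c ≤ (ballIn G Set.univ r v ∩ D).ncard) ↔
    (∃ D : Set V, D ⊆ S ∧ D.ncard ≤ k ∧ ∀ v ∈ L, c ≤ (ballIn G S r v ∩ D).ncard) :=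
  rc_domination_projection_kernel_general G r c k L S hLS hcore h1 h2
end

section
/- Let Ĝ be a finite simple graph, K ⊆ V(Ĝ), O = V(Ĝ) ∖ K, r ≥ 1 and k natural numbers. Let G' be obtained from Ĝ by attaching to every vertex v ∈ O a pendant path of 2r new vertices. Then G' has a set D' with |D'| ≤ k + |O| and |N^r_{G'}[x] ∩ D'| = 1 for every vertex x of G' (an r-perfect code), if and only if Ĝ has a set D̂ ⊆ K with |D̂| ≤ k such that |N^r_{Ĝ}[v] ∩ D̂| = 1 for every v ∈ K and |N^r_{Ĝ}[v] ∩ D̂| ≤ 1 for every v ∈ O. -/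
/-- Graph obtained from `G` by attaching to every vertex `v` of `O` a pendant path of
`ℓ` new vertices: a path of length `ℓ` from `v` to a fresh end-vertex (`B = ↥O`),
with `ℓ - 1` fresh internal vertices. -/
def SimpleGraph.attachPendants {V : Type*} [Fintype V] [DecidableEq V]
    (G : SimpleGraph V) (O : Finset V) (ℓ : ℕ) :
    SimpleGraph ((V ⊕ {o : V // o ∈ O}) ⊕ (Σ _p : {o : V // o ∈ O}, Fin (ℓ - 1))) :=
  G.addPaths {o : V // o ∈ O} {o : V // o ∈ O} (fun o => .inl o.1) (fun o => .inr o)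
    (fun _ => ℓ)

/-!
A walk in `G'` can leave a pendant path only through the vertex `o` it hangs from, so distances
in `G'` are read off from the anchors in `Ĝ` and the depths on the paths; in particular a vertex
at depth `≥ r` on the path of `o` is within distance `r` only of `o` and of vertices of that path.
If `D'` is an `r`-perfect code of `G'`, the code vertex covering the end of the path of `o` has
depth `i ≥ r`, and a code vertex of depth `< r` on that path would be within distance `r`, together
with it, of the vertex at depth `i - r`. So `D'` contains no vertex of `O` and no vertex of depth
`< r`, its trace on `Ĝ` is the required `D̂`, and at least `|O|` of its vertices lie on the paths.
Conversely, given `D̂`, the vertices of the path of `o` within distance `r` of `D̂` are those of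
depth `< c` for some `c ≤ r`, and one code vertex at depth `r + c` covers exactly the others.
-/

namespace SimpleGraph

variable {V : Type*} (G : SimpleGraph V)

def closedBall (c : V) (n : ℕ) : Set V := {v | ∃ p : G.Walk v c, p.length ≤ n}

def IsPerfectCode (n : ℕ) (D : Set V) : Prop := ∀ v, (G.closedBall v n ∩ D).ncard = 1

variable {G}

theorem mem_closedBall_comm {u v : V} {n : ℕ} : u ∈ G.closedBall v n ↔ v ∈ G.closedBall u n :=
  ⟨fun ⟨p, hp⟩ => ⟨p.reverse, by simpa using hp⟩, fun ⟨p, hp⟩ => ⟨p.reverse, by simpa using hp⟩⟩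

theorem IsPerfectCode.eq_of_mem_closedBall {n : ℕ} {D : Set V} (hD : G.IsPerfectCode n D)
    {a b v : V} (ha : a ∈ D) (hb : b ∈ D) (hav : a ∈ G.closedBall v n)
    (hbv : b ∈ G.closedBall v n) : a = b := by
  obtain ⟨c, hc⟩ := Set.ncard_eq_one.mp (hD v)
  have hac : a ∈ ({c} : Set V) := hc ▸ ⟨hav, ha⟩
  have hbc : b ∈ ({c} : Set V) := hc ▸ ⟨hbv, hb⟩
  exact hac.trans hbc.symm

end SimpleGraph

theorem Antitone.exists_le_forall_iff_lt {p : ℕ → Prop} (hp : Antitone p) {n : ℕ} (hn : ¬p n) :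
    ∃ c ≤ n, ∀ e, p e ↔ e < c := by
  classical
  have hex : ∃ m, ¬p m := ⟨n, hn⟩
  refine ⟨Nat.find hex, Nat.find_min' hex hn, fun e => ⟨fun he => ?_, fun he => ?_⟩⟩
  · by_contra hle
    exact Nat.find_spec hex (hp (not_lt.mp hle) he)
  · exact not_not.mp (Nat.find_min _ he)

abbrev PendantVert {V : Type*} (O : Finset V) (ℓ : ℕ) : Type _ :=
  (V ⊕ {o : V // o ∈ O}) ⊕ (Σ _p : {o : V // o ∈ O}, Fin (ℓ - 1))

namespace PendantVert

variable {V : Type*} {O : Finset V} {ℓ : ℕ}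

def base (v : V) : PendantVert O ℓ := .inl (.inl v)

def anchor : PendantVert O ℓ → V
  | .inl (.inl v) => v
  | .inl (.inr o) => o
  | .inr ⟨o, _⟩ => o

def depth : PendantVert O ℓ → ℕ
  | .inl (.inl _) => 0
  | .inl (.inr _) => ℓ
  | .inr ⟨_, i⟩ => i + 1

def path : PendantVert O ℓ → Option {o : V // o ∈ O}
  | .inl (.inl _) => none
  | .inl (.inr o) => some o
  | .inr ⟨o, _⟩ => some o

/-- The vertex at depth `j` on the pendant path of `o`; junk (the end-vertex) for `j > ℓ`. -/
def atDepth (o : {o : V // o ∈ O}) (j : ℕ) : PendantVert O ℓ :=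
  if h : 0 < j ∧ j < ℓ then .inr ⟨o, ⟨j - 1, by omega⟩⟩
  else if j = 0 then base o.1 else .inl (.inr o)

@[simp] theorem anchor_base (v : V) : anchor (base v : PendantVert O ℓ) = v := rfl

@[simp] theorem depth_base (v : V) : depth (base v : PendantVert O ℓ) = 0 := rfl

@[simp] theorem path_base (v : V) : path (base v : PendantVert O ℓ) = none := rfl

theorem base_injective : Function.Injective (base : V → PendantVert O ℓ) :=
  fun _ _ h => by simpa [base] using h

@[simp] theorem atDepth_zero (o : {o : V // o ∈ O}) :
    (atDepth o 0 : PendantVert O ℓ) = base o.1 := by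
  simp [atDepth]

@[simp] theorem anchor_atDepth (o : {o : V // o ∈ O}) (j : ℕ) :
    anchor (atDepth o j : PendantVert O ℓ) = o := by
  unfold atDepth; split_ifs <;> rfl

theorem depth_atDepth (o : {o : V // o ∈ O}) {j : ℕ} (hj : j ≤ ℓ) :
    depth (atDepth o j : PendantVert O ℓ) = j := by
  unfold atDepth; split_ifs <;> simp [base, depth] <;> omega

theorem path_atDepth (o : {o : V // o ∈ O}) {j : ℕ} (hj : 0 < j) :
    path (atDepth o j : PendantVert O ℓ) = some o := by
  unfold atDepth; split_ifs <;> first | rfl | omega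

theorem atDepth_ne_base (o : {o : V // o ∈ O}) {j : ℕ} (hj : 0 < j) (v : V) :
    (atDepth o j : PendantVert O ℓ) ≠ base v := fun h => by
  simpa [h] using path_atDepth (ℓ := ℓ) o hj

theorem atDepth_injective_left {f : {o : V // o ∈ O} → ℕ} :
    Function.Injective fun o => (atDepth o (f o) : PendantVert O ℓ) :=
  fun o o' h => by simpa using congrArg anchor h

theorem anchor_eq_of_path_eq_some {x : PendantVert O ℓ} {o} (h : path x = some o) :
    anchor x = o := by
  rcases x with (_ | _) | ⟨_, _⟩ <;> simp_all [path, anchor]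

theorem one_le_depth_of_path_eq_some (hℓ : 1 ≤ ℓ) {x : PendantVert O ℓ} {o}
    (h : path x = some o) :
    1 ≤ depth x := by
  rcases x with (_ | _) | ⟨_, _⟩ <;> simp_all [path, depth]

theorem eq_base_or_eq_atDepth (hℓ : 1 ≤ ℓ) (x : PendantVert O ℓ) :
    (∃ v ∉ O, x = base v) ∨ ∃ o e, e ≤ ℓ ∧ x = atDepth o e := by
  rcases x with (v | o) | ⟨o, i⟩
  · by_cases hv : v ∈ O
    · exact .inr ⟨⟨v, hv⟩, 0, by omega, by rw [atDepth_zero]; rfl⟩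
    · exact .inl ⟨v, hv, rfl⟩
  · exact .inr ⟨o, ℓ, le_rfl, by simp [atDepth]; omega⟩
  · refine .inr ⟨o, i + 1, by omega, ?_⟩
    rw [atDepth, dif_pos (by omega)]
    rfl


section

variable [Fintype V] [DecidableEq V] {G : SimpleGraph V} {n r : ℕ}

theorem cases_of_adj {x y : PendantVert O ℓ} (h : (G.attachPendants O ℓ).Adj x y) :
    (G.Adj (anchor x) (anchor y) ∧ depth x = 0 ∧ depth y = 0) ∨
      (anchor x = anchor y ∧ (depth x + 1 = depth y ∨ depth y + 1 = depth x) ∧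
        (path x = path y ∨ depth x = 0 ∨ depth y = 0)) := by
  rw [SimpleGraph.attachPendants, SimpleGraph.addPaths, SimpleGraph.fromRel_adj] at h
  obtain ⟨-, h | h⟩ := h
  all_goals
    obtain ⟨u, w, huw, rfl, rfl⟩ | ⟨o, hℓ, rfl, rfl⟩ | ⟨o, i, hi, rfl, rfl⟩ |
      ⟨o, i, j, hij, rfl, rfl⟩ | ⟨o, i, hi, rfl, rfl⟩ := h
  all_goals first
    | exact .inl ⟨huw, rfl, rfl⟩
    | exact .inl ⟨huw.symm, rfl, rfl⟩
    | exact .inr ⟨rfl, by simp only [depth]; omega, by simp [path, depth]⟩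

theorem exists_anchor_walk_or_same_path (hℓ : 1 ≤ ℓ) {x y : PendantVert O ℓ}
    (w : (G.attachPendants O ℓ).Walk x y) :
    (∃ q : G.Walk (anchor x) (anchor y), q.length + depth x + depth y ≤ w.length) ∨
      ∃ o, path x = some o ∧ path y = some o ∧
        depth x ≤ depth y + w.length ∧ depth y ≤ depth x + w.length := by
  induction w with
  | nil =>
    rename_i x
    rcases x with (v | o) | ⟨o, i⟩
    · exact .inl ⟨.nil, le_of_eq rfl⟩
    · exact .inr ⟨o, rfl, rfl, by omega, by omega⟩
    · exact .inr ⟨o, rfl, rfl, by omega, by omega⟩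
  | cons h w ih =>
    rename_i x b y
    simp only [SimpleGraph.Walk.length_cons]
    rcases cases_of_adj h with ⟨hadj, hx, hb⟩ | ⟨hanc, hstep, hpath⟩
    · rcases ih with ⟨q, hq⟩ | ⟨o, hbo, -⟩
      · exact .inl ⟨q.cons hadj, by simp only [SimpleGraph.Walk.length_cons]; omega⟩
      · have := one_le_depth_of_path_eq_some hℓ hbo
        omega
    · rcases ih with ⟨q, hq⟩ | ⟨o, hbo, hyo, hby, hyb⟩
      · exact .inl ⟨q.copy hanc.symm rfl, by simp only [SimpleGraph.Walk.length_copy]; omega⟩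
      · have hb1 := one_le_depth_of_path_eq_some hℓ hbo
        rcases hpath with hxb | hx0 | hb0
        · exact .inr ⟨o, hxb ▸ hbo, hyo, by omega, by omega⟩
        · have hxo : anchor x = o := hanc.trans (anchor_eq_of_path_eq_some hbo)
          refine .inl ⟨SimpleGraph.Walk.nil.copy hxo.symm (anchor_eq_of_path_eq_some hyo).symm, ?_⟩
          simp only [SimpleGraph.Walk.length_copy, SimpleGraph.Walk.length_nil]
          omega
        · omega

def baseHom : G →g G.attachPendants O ℓ where
  toFun := base
  map_rel' h := by
    rw [SimpleGraph.attachPendants, SimpleGraph.addPaths, SimpleGraph.fromRel_adj]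
    exact ⟨fun e => h.ne (base_injective e), .inl (.inl ⟨_, _, h, rfl, rfl⟩)⟩

theorem exists_walk_base {u v : V} (q : G.Walk u v) :
    ∃ w : (G.attachPendants O ℓ).Walk (base u) (base v), w.length = q.length :=
  ⟨q.map baseHom, q.length_map baseHom⟩

theorem adj_atDepth_succ (o : {o : V // o ∈ O}) {j : ℕ} (hj : j < ℓ) :
    (G.attachPendants O ℓ).Adj (atDepth o j) (atDepth o (j + 1)) := by
  have hne : (atDepth o j : PendantVert O ℓ) ≠ atDepth o (j + 1) := fun h => by
    have := congrArg depth h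
    rw [depth_atDepth o hj.le, depth_atDepth o hj] at this
    omega
  rw [SimpleGraph.attachPendants, SimpleGraph.addPaths, SimpleGraph.fromRel_adj]
  refine ⟨hne, .inl ?_⟩
  unfold atDepth
  rcases Nat.lt_or_ge (j + 1) ℓ with hlt | hge <;> rcases Nat.eq_zero_or_pos j with rfl | hj0
  · exact .inr (.inr (.inl ⟨o, ⟨0, by omega⟩, rfl, by simp [base], by simp [hlt]⟩))
  · exact .inr (.inr (.inr (.inl ⟨o, ⟨j - 1, by omega⟩, ⟨j, by omega⟩, by simp; omega,
      by simp [hj0, hj], by simp [hlt]⟩)))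
  · exact .inr (.inl ⟨o, by omega, by simp [base], by simp; omega⟩)
  · exact .inr (.inr (.inr (.inr ⟨o, ⟨j - 1, by omega⟩, by simp; omega, by simp [hj0, hj],
      by simp; omega⟩)))

theorem exists_walk_atDepth (o : {o : V // o ∈ O}) {a b : ℕ} (hab : a ≤ b) (hb : b ≤ ℓ) :
    ∃ w : (G.attachPendants O ℓ).Walk (atDepth o a) (atDepth o b), w.length = b - a := by
  induction b, hab using Nat.le_induction with
  | base => exact ⟨.nil, by simp⟩
  | succ b hab ih =>
    obtain ⟨w, hw⟩ := ih (by omega)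
    exact ⟨w.concat (adj_atDepth_succ o (by omega)), by simp [hw]; omega⟩

theorem base_mem_closedBall_base_iff (hℓ : 1 ≤ ℓ) {y v : V} :
    base y ∈ (G.attachPendants O ℓ).closedBall (base v) n ↔ y ∈ G.closedBall v n := by
  constructor
  · rintro ⟨w, hw⟩
    rcases exists_anchor_walk_or_same_path hℓ w with ⟨q, hq⟩ | ⟨o, h, -⟩
    · exact ⟨q, by simp only [anchor_base, depth_base] at hq; omega⟩
    · simp at h
  · rintro ⟨q, hq⟩
    obtain ⟨w, hw⟩ := exists_walk_base (O := O) (ℓ := ℓ) q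
    exact ⟨w, hw ▸ hq⟩

theorem base_mem_closedBall_atDepth_iff (hℓ : 1 ≤ ℓ) {y : V} {o : {o : V // o ∈ O}} {e : ℕ}
    (he : e ≤ ℓ) :
    base y ∈ (G.attachPendants O ℓ).closedBall (atDepth o e) n ↔
      ∃ q : G.Walk y o, q.length + e ≤ n := by
  constructor
  · rintro ⟨w, hw⟩
    rcases exists_anchor_walk_or_same_path hℓ w with ⟨q, hq⟩ | ⟨o, h, -⟩
    · rw [depth_atDepth o he, depth_base] at hq
      refine ⟨q.copy (anchor_base y) (anchor_atDepth o e), ?_⟩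
      rw [SimpleGraph.Walk.length_copy]
      omega
    · simp at h
  · rintro ⟨q, hq⟩
    obtain ⟨w₁, hw₁⟩ := exists_walk_base (O := O) (ℓ := ℓ) q
    obtain ⟨w₂, hw₂⟩ := exists_walk_atDepth (G := G) o (Nat.zero_le e) he
    exact ⟨w₁.append (w₂.copy (atDepth_zero o) rfl), by simp [hw₁, hw₂]; omega⟩

theorem atDepth_mem_closedBall_atDepth_iff (hℓ : 1 ≤ ℓ) {o : {o : V // o ∈ O}} {a b : ℕ}
    (ha : a ≤ ℓ) (hb : b ≤ ℓ) :
    atDepth o a ∈ (G.attachPendants O ℓ).closedBall (atDepth o b) n ↔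
      a ≤ b + n ∧ b ≤ a + n := by
  constructor
  · rintro ⟨w, hw⟩
    have := exists_anchor_walk_or_same_path hℓ w
    rw [depth_atDepth o ha, depth_atDepth o hb] at this
    rcases this with ⟨q, hq⟩ | ⟨-, -, -, h1, h2⟩ <;> omega
  · rintro ⟨h1, h2⟩
    rcases le_total a b with hab | hba
    · obtain ⟨w, hw⟩ := exists_walk_atDepth (G := G) o hab hb
      exact ⟨w, by omega⟩
    · obtain ⟨w, hw⟩ := exists_walk_atDepth (G := G) o hba ha
      exact ⟨w.reverse, by simp; omega⟩

theorem lt_of_atDepth_mem_closedBall_atDepth (hℓ : 1 ≤ ℓ) {o o' : {o : V // o ∈ O}}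
    (hoo : o ≠ o') {a b : ℕ} (ha : a ≤ ℓ) (hb : b ≤ ℓ)
    (h : atDepth o a ∈ (G.attachPendants O ℓ).closedBall (atDepth o' b) n) : a + b < n := by
  obtain ⟨w, hw⟩ := h
  rcases exists_anchor_walk_or_same_path hℓ w with ⟨q, hq⟩ | ⟨p, hp, hp', -⟩
  · have hq0 : q.length ≠ 0 := fun h0 =>
      hoo (Subtype.ext (by simpa using q.eq_of_length_eq_zero h0))
    rw [depth_atDepth o ha, depth_atDepth o' hb] at hq
    omega
  · have e := anchor_eq_of_path_eq_some hp
    have e' := anchor_eq_of_path_eq_some hp'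
    simp only [anchor_atDepth] at e e'
    exact (hoo (Subtype.ext (e.trans e'.symm))).elim

theorem image_base_subset_closedBall_base_inter (hℓ : 1 ≤ ℓ) (D : Set (PendantVert O ℓ))
    (v : V) :
    base '' (G.closedBall v r ∩ base ⁻¹' D) ⊆
      (G.attachPendants O ℓ).closedBall (base v) r ∩ D := by
  rintro _ ⟨u, ⟨hu, huD⟩, rfl⟩
  exact ⟨(base_mem_closedBall_base_iff hℓ).mpr hu, huD⟩

theorem closedBall_base_inter_eq_image (hℓ : 1 ≤ ℓ) {D : Set (PendantVert O ℓ)}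
    (hlow : ∀ o j, j < r → atDepth o j ∉ D) {v : V} (hv : v ∉ O) :
    (G.attachPendants O ℓ).closedBall (base v) r ∩ D =
      base '' (G.closedBall v r ∩ base ⁻¹' D) := by
  refine subset_antisymm ?_ (image_base_subset_closedBall_base_inter hℓ D v)
  rintro z ⟨hz, hzD⟩
  rcases eq_base_or_eq_atDepth hℓ z with ⟨u, -, rfl⟩ | ⟨o, e, he, rfl⟩
  · exact ⟨u, ⟨(base_mem_closedBall_base_iff hℓ).mp hz, hzD⟩, rfl⟩
  · obtain ⟨q, hq⟩ :=
      (base_mem_closedBall_atDepth_iff hℓ he).mp (SimpleGraph.mem_closedBall_comm.mp hz)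
    have hre : r ≤ e := not_lt.mp fun h => hlow o e h hzD
    have hvo : v = o := q.eq_of_length_eq_zero (by omega)
    exact absurd (hvo ▸ o.2) hv

theorem atDepth_mem_closedBall_atDepth_iff_of_le (hr : 1 ≤ r) {o o' : {o : V // o ∈ O}}
    {m e : ℕ} (hrm : r ≤ m) (hm : m ≤ 2 * r) (he : e ≤ 2 * r) :
    atDepth o' m ∈ (G.attachPendants O (2 * r)).closedBall (atDepth o e) r ↔
      o' = o ∧ m ≤ e + r := by
  have hℓ : 1 ≤ 2 * r := by omega
  obtain rfl | hoo := eq_or_ne o' o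
  · rw [atDepth_mem_closedBall_atDepth_iff hℓ hm he]
    exact ⟨fun h => ⟨rfl, h.1⟩, fun h => ⟨h.2, by omega⟩⟩
  · refine iff_of_false (fun h => ?_) (fun h => hoo h.1)
    have := lt_of_atDepth_mem_closedBall_atDepth hℓ hoo hm he h
    omega

theorem exists_atDepth_mem_of_isPerfectCode (hr : 1 ≤ r) {D : Set (PendantVert O (2 * r))}
    (hD : (G.attachPendants O (2 * r)).IsPerfectCode r D) (o : {o : V // o ∈ O}) :
    ∃ i, r ≤ i ∧ i ≤ 2 * r ∧ atDepth o i ∈ D := by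
  have hℓ : 1 ≤ 2 * r := by omega
  obtain ⟨z, hz, hzD⟩ :=
    Set.nonempty_of_ncard_ne_zero (s := _ ∩ D) (by rw [hD (atDepth o (2 * r))]; omega)
  rcases eq_base_or_eq_atDepth hℓ z with ⟨u, -, rfl⟩ | ⟨o', i, hi, rfl⟩
  · obtain ⟨q, hq⟩ := (base_mem_closedBall_atDepth_iff hℓ le_rfl).mp hz
    omega
  · obtain rfl | hoo := eq_or_ne o' o
    · have := (atDepth_mem_closedBall_atDepth_iff hℓ hi le_rfl).mp hz
      exact ⟨i, by omega, hi, hzD⟩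
    · have := lt_of_atDepth_mem_closedBall_atDepth hℓ hoo hi le_rfl hz
      omega

theorem atDepth_not_mem_of_isPerfectCode (hr : 1 ≤ r) {D : Set (PendantVert O (2 * r))}
    (hD : (G.attachPendants O (2 * r)).IsPerfectCode r D) (o : {o : V // o ∈ O}) {j : ℕ}
    (hj : j < r) : atDepth o j ∉ D := by
  intro hjD
  have hℓ : 1 ≤ 2 * r := by omega
  obtain ⟨i, hri, hi, hiD⟩ := exists_atDepth_mem_of_isPerfectCode hr hD o
  have hji := hD.eq_of_mem_closedBall (v := atDepth o (i - r)) hjD hiD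
    ((atDepth_mem_closedBall_atDepth_iff hℓ (by omega) (by omega)).mpr (by omega))
    ((atDepth_mem_closedBall_atDepth_iff hℓ hi (by omega)).mpr (by omega))
  have := congrArg depth hji
  rw [depth_atDepth o (by omega), depth_atDepth o hi] at this
  omega

theorem ncard_preimage_base_add_card_le (hr : 1 ≤ r) {D : Set (PendantVert O (2 * r))}
    (hD : (G.attachPendants O (2 * r)).IsPerfectCode r D) :
    (base ⁻¹' D).ncard + O.card ≤ D.ncard := by
  choose i hi using exists_atDepth_mem_of_isPerfectCode hr hD
  set P : Set (PendantVert O (2 * r)) := Set.range fun o => atDepth o (i o)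
  have hdisj : Disjoint (base '' (base ⁻¹' D)) P := by
    rw [Set.disjoint_left]
    rintro _ ⟨v, -, rfl⟩ ⟨o, ho⟩
    exact atDepth_ne_base o (by have := (hi o).1; omega) v ho
  have hsub : base '' (base ⁻¹' D) ∪ P ⊆ D :=
    Set.union_subset (Set.image_preimage_subset _ _)
      (Set.range_subset_iff.mpr fun o => (hi o).2.2)
  calc (base ⁻¹' D).ncard + O.card
      = (base '' (base ⁻¹' D) ∪ P).ncard := by
        rw [Set.ncard_union_eq hdisj, Set.ncard_image_of_injective _ base_injective,
          Set.ncard_range_of_injective atDepth_injective_left]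
        simp
    _ ≤ D.ncard := Set.ncard_le_ncard hsub

end

variable {r : ℕ} {Dhat : Set V} {c : {o : V // o ∈ O} → ℕ}

/-- The intended `c o` is the number of vertices of the path of `o` (`o` included) within
distance `r` of `Dhat` (see `exists_cover_depth`); the code vertex at depth `r + c o` then covers
exactly the other vertices of the path. -/
def liftCode (r : ℕ) (Dhat : Set V) (c : {o : V // o ∈ O} → ℕ) : Set (PendantVert O (2 * r)) :=
  base '' Dhat ∪ Set.range fun o => atDepth o (r + c o)

theorem ncard_liftCode_le [Finite V] : (liftCode r Dhat c).ncard ≤ Dhat.ncard + O.card := by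
  refine (Set.ncard_union_le _ _).trans (add_le_add (Set.ncard_image_le Dhat.toFinite) ?_)
  rw [Set.ncard_range_of_injective atDepth_injective_left]
  simp

theorem preimage_base_liftCode (hr : 1 ≤ r) : base ⁻¹' liftCode r Dhat c = Dhat := by
  ext v
  simp only [liftCode, Set.mem_preimage, Set.mem_union, Set.mem_image, base_injective.eq_iff,
    exists_eq_right, Set.mem_range, or_iff_left_iff_imp]
  rintro ⟨o, ho⟩
  exact absurd ho (atDepth_ne_base o (by omega) v)

theorem atDepth_not_mem_liftCode (hDO : ∀ o ∈ O, o ∉ Dhat) (hc : ∀ o, c o ≤ r)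
    (o : {o : V // o ∈ O}) {j : ℕ} (hj : j < r) : atDepth o j ∉ liftCode r Dhat c := by
  rintro (⟨v, hv, h⟩ | ⟨o', h⟩)
  · obtain rfl : j = 0 := by
      by_contra hj0
      exact atDepth_ne_base o (Nat.pos_of_ne_zero hj0) v h.symm
    rw [atDepth_zero, base_injective.eq_iff] at h
    exact hDO o o.2 (h ▸ hv)
  · have := congrArg depth h
    rw [depth_atDepth o' (by have := hc o'; omega), depth_atDepth o (by omega)] at this
    omega

theorem exists_cover_depth (G : SimpleGraph V) (r : ℕ) (hDO : ∀ o ∈ O, o ∉ Dhat) :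
    ∃ c : {o : V // o ∈ O} → ℕ, ∀ o, c o ≤ r ∧
      ∀ e, (∃ y ∈ Dhat, ∃ q : G.Walk y o, q.length + e ≤ r) ↔ e < c o := by
  choose c hc using fun o : {o : V // o ∈ O} =>
    Antitone.exists_le_forall_iff_lt
      (p := fun e => ∃ y ∈ Dhat, ∃ q : G.Walk y o, q.length + e ≤ r)
      (fun a b hab ⟨y, hy, q, hq⟩ => ⟨y, hy, q, by omega⟩)
      (n := r) fun ⟨y, hy, q, hq⟩ => hDO o o.2 (q.eq_of_length_eq_zero (by omega) ▸ hy)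
  exact ⟨c, hc⟩

theorem isPerfectCode_liftCode [Fintype V] [DecidableEq V] {G : SimpleGraph V} (hr : 1 ≤ r)
    (hDO : ∀ o ∈ O, o ∉ Dhat)
    (hO : ∀ o ∈ O, (G.closedBall o r ∩ Dhat).ncard ≤ 1)
    (hK : ∀ v ∉ O, (G.closedBall v r ∩ Dhat).ncard = 1)
    (hc : ∀ o : {o : V // o ∈ O}, c o ≤ r ∧
      ∀ e, (∃ y ∈ Dhat, ∃ q : G.Walk y o, q.length + e ≤ r) ↔ e < c o) :
    (G.attachPendants O (2 * r)).IsPerfectCode r (liftCode r Dhat c) := by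
  have hℓ : 1 ≤ 2 * r := by omega
  intro x
  rcases eq_base_or_eq_atDepth hℓ x with ⟨v, hv, rfl⟩ | ⟨o, e, he, rfl⟩
  · rw [closedBall_base_inter_eq_image hℓ
        (fun o _ hj => atDepth_not_mem_liftCode hDO (fun o => (hc o).1) o hj) hv,
      preimage_base_liftCode hr, Set.ncard_image_of_injective _ base_injective, hK v hv]
  have hpend : ∀ o', atDepth o' (r + c o') ∈
      (G.attachPendants O (2 * r)).closedBall (atDepth o e) r ↔ o' = o ∧ c o ≤ e := fun o' => by
    rw [atDepth_mem_closedBall_atDepth_iff_of_le hr (by omega) (by have := (hc o').1; omega) he]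
    constructor <;> rintro ⟨rfl, h⟩ <;> exact ⟨rfl, by omega⟩
  rw [Set.ncard_eq_one]
  by_cases hcovered : e < c o
  · obtain ⟨y, hy, q, hq⟩ := ((hc o).2 e).mpr hcovered
    refine ⟨base y, Set.eq_singleton_iff_unique_mem.mpr
      ⟨⟨(base_mem_closedBall_atDepth_iff hℓ he).mpr ⟨q, hq⟩, .inl ⟨y, hy, rfl⟩⟩, ?_⟩⟩
    rintro _ ⟨hz, ⟨y', hy', rfl⟩ | ⟨o', rfl⟩⟩
    · obtain ⟨q', hq'⟩ := (base_mem_closedBall_atDepth_iff hℓ he).mp hz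
      exact congrArg base ((Set.ncard_le_one (Set.toFinite _)).mp (hO o o.2)
        y' ⟨⟨q', by omega⟩, hy'⟩ y ⟨⟨q, by omega⟩, hy⟩)
    · have := ((hpend o').mp hz).2
      omega
  · refine ⟨atDepth o (r + c o), Set.eq_singleton_iff_unique_mem.mpr
      ⟨⟨(hpend o).mpr ⟨rfl, by omega⟩, .inr ⟨o, rfl⟩⟩, ?_⟩⟩
    rintro _ ⟨hz, ⟨y', hy', rfl⟩ | ⟨o', rfl⟩⟩
    · obtain ⟨q', hq'⟩ := (base_mem_closedBall_atDepth_iff hℓ he).mp hz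
      exact absurd (((hc o).2 e).mp ⟨y', hy', q', hq'⟩) hcovered
    · rw [((hpend o').mp hz).1]

end PendantVert

open PendantVert in
/-- Let `G'` be obtained from `Ĝ` by attaching to every vertex of
`O = V(Ĝ) ∖ K` a pendant path of `2r` new vertices.  Then `G'` has an `r`-perfect code
of size at most `k + |O|` iff `Ĝ` has a set `D̂ ⊆ K` of size at most `k` with
`|N^r_Ĝ[v] ∩ D̂| = 1` for every `v ∈ K` and `|N^r_Ĝ[v] ∩ D̂| ≤ 1` for every `v ∈ O`. -/
theorem perfect_code_kernel_back {V : Type*} [Fintype V] [DecidableEq V]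
    (Ghat : SimpleGraph V) (K : Finset V) (r k : ℕ) (hr : 1 ≤ r) :
    (∃ D' : Set ((V ⊕ {o : V // o ∈ Kᶜ}) ⊕ (Σ _p : {o : V // o ∈ Kᶜ}, Fin (2 * r - 1))),
        D'.ncard ≤ k + Kᶜ.card ∧
        ∀ x, ({y | ∃ w : (Ghat.attachPendants Kᶜ (2 * r)).Walk y x,
                    w.length ≤ r} ∩ D').ncard = 1) ↔
    (∃ Dhat : Set V, Dhat ⊆ (K : Set V) ∧ Dhat.ncard ≤ k ∧
        (∀ v ∈ K, ({y : V | ∃ w : Ghat.Walk y v, w.length ≤ r} ∩ Dhat).ncard = 1) ∧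
        (∀ v ∈ Kᶜ, ({y : V | ∃ w : Ghat.Walk y v, w.length ≤ r} ∩ Dhat).ncard ≤ 1)) := by
  show (∃ D : Set (PendantVert Kᶜ (2 * r)), D.ncard ≤ k + Kᶜ.card ∧
      (Ghat.attachPendants Kᶜ (2 * r)).IsPerfectCode r D) ↔
    ∃ Dhat : Set V, Dhat ⊆ K ∧ Dhat.ncard ≤ k ∧
      (∀ v ∈ K, (Ghat.closedBall v r ∩ Dhat).ncard = 1) ∧
      ∀ v ∈ Kᶜ, (Ghat.closedBall v r ∩ Dhat).ncard ≤ 1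
  have hℓ : 1 ≤ 2 * r := by omega
  constructor
  · rintro ⟨D, hsize, hD⟩
    have hlow := atDepth_not_mem_of_isPerfectCode (G := Ghat) hr hD
    refine ⟨base ⁻¹' D, fun v hv => ?_, ?_, fun v hv => ?_, fun v hv => ?_⟩
    · by_contra hvK
      exact hlow ⟨v, Finset.mem_compl.mpr hvK⟩ hr (by rwa [atDepth_zero])
    · have := ncard_preimage_base_add_card_le hr hD
      omega
    · rw [← Set.ncard_image_of_injective _ base_injective,
        ← closedBall_base_inter_eq_image hℓ (fun o _ => hlow o) (by simpa using hv)]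
      exact hD _
    · rw [← Set.ncard_image_of_injective _ base_injective, ← hD (base v)]
      exact Set.ncard_le_ncard (image_base_subset_closedBall_base_inter hℓ D v)
  · rintro ⟨Dhat, hK, hk, hin, hout⟩
    have hDO : ∀ o ∈ Kᶜ, o ∉ Dhat := fun o ho hoD => Finset.mem_compl.mp ho (hK hoD)
    obtain ⟨c, hc⟩ := exists_cover_depth Ghat r hDO
    refine ⟨liftCode r Dhat c, ncard_liftCode_le.trans (by omega),
      isPerfectCode_liftCode hr hDO hout (fun v hv => hin v (by simpa using hv)) hc⟩
end
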